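/- arXiv:2301.08462 — 3 statements merged into one kernel-verified Lean document; each statement's English description precedes it below -/
import Mathlib

section
/- If f : V₁ → W₁ and g : V₂ → W₂ are linear maps between vector spaces over a field k, then the kernel of f ⊗ g : V₁ ⊗ V₂ → W₁ ⊗ W₂ equals ker(f) ⊗ V₂ + V₁ ⊗ ker(g) as a subspace of V₁ ⊗ V₂. -/
/-!
Factor `f` and `g` through their images. Since every vector space is flat, the inclusion
`im f ⊗ im g → W₁ ⊗ W₂` is injective, so `f ⊗ g` has the same kernel as the tensor product of
the two surjections `V₁ → im f` and `V₂ → im g`; for surjections, right exactness of the tensor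
product computes that kernel as `ker f ⊗ V₂ + V₁ ⊗ ker g`.
-/

open TensorProduct

namespace TensorProduct

variable {R : Type*} [CommRing R] {M N P Q : Type*} [AddCommGroup M] [AddCommGroup N]
  [AddCommGroup P] [AddCommGroup Q] [Module R M] [Module R N] [Module R P] [Module R Q]

lemma range_rTensor_subtype (p : Submodule R M) :
    LinearMap.range (p.subtype.rTensor N) = Submodule.map₂ (mk R M N) p ⊤ := by
  rw [LinearMap.rTensor, range_map, Submodule.range_subtype, LinearMap.range_id]

lemma range_lTensor_subtype (q : Submodule R N) :
    LinearMap.range (q.subtype.lTensor M) = Submodule.map₂ (mk R M N) ⊤ q := by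
  rw [LinearMap.lTensor, range_map, Submodule.range_subtype, LinearMap.range_id]

lemma ker_map_of_surjective {f : M →ₗ[R] P} {g : N →ₗ[R] Q}
    (hf : Function.Surjective f) (hg : Function.Surjective g) :
    LinearMap.ker (map f g) =
      Submodule.map₂ (mk R M N) (LinearMap.ker f) ⊤ ⊔
        Submodule.map₂ (mk R M N) ⊤ (LinearMap.ker g) := by
  rw [map_ker f.exact_subtype_ker_map hf g.exact_subtype_ker_map hg,
    range_lTensor_subtype, range_rTensor_subtype, sup_comm]

lemma ker_map_eq_ker_map_rangeRestrict (f : M →ₗ[R] P) (g : N →ₗ[R] Q)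
    [Module.Flat R P] [Module.Flat R (LinearMap.range g)] :
    LinearMap.ker (map f g) = LinearMap.ker (map f.rangeRestrict g.rangeRestrict) := by
  have hincl : Function.Injective (mapIncl (LinearMap.range f) (LinearMap.range g)) :=
    Module.Flat.tensorProduct_mapIncl_injective_of_right _ _
  have hfactor : map f g = mapIncl (LinearMap.range f) (LinearMap.range g) ∘ₗ
      map f.rangeRestrict g.rangeRestrict := by
    rw [← map_comp]; rfl
  rw [hfactor, LinearMap.ker_comp, LinearMap.ker_eq_bot.mpr hincl, Submodule.comap_bot]

end TensorProduct

/-- If `f : V₁ → W₁` and `g : V₂ → W₂` are linear maps between vector spaces over a field `k`,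
then `ker (f ⊗ g) = ker f ⊗ V₂ + V₁ ⊗ ker g` as subspaces of `V₁ ⊗ V₂`. -/
theorem ker_tensor_map_eq (k : Type*) [Field k]
    (V₁ V₂ W₁ W₂ : Type*) [AddCommGroup V₁] [AddCommGroup V₂] [AddCommGroup W₁] [AddCommGroup W₂]
    [Module k V₁] [Module k V₂] [Module k W₁] [Module k W₂]
    (f : V₁ →ₗ[k] W₁) (g : V₂ →ₗ[k] W₂) :
    LinearMap.ker (TensorProduct.map f g) =
      Submodule.map₂ (TensorProduct.mk k V₁ V₂) (LinearMap.ker f) ⊤ ⊔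
        Submodule.map₂ (TensorProduct.mk k V₁ V₂) ⊤ (LinearMap.ker g) := by
  rw [ker_map_eq_ker_map_rangeRestrict, ker_map_of_surjective f.surjective_rangeRestrict
    g.surjective_rangeRestrict, LinearMap.ker_rangeRestrict, LinearMap.ker_rangeRestrict]
end

section
/- Let C be a coalgebra over a commutative ring R and δ : C → C an R-linear map satisfying δ∘δ = δ, ε∘δ = ε, and Δ∘δ = (δ⊗δ)∘Δ. Define the reduced comultiplication Δ̄ = Δ − (id ⊗ δ)∘Δ − (δ ⊗ id)∘Δ. Then Δ̄ is coassociative: (Δ̄ ⊗ id)∘Δ̄ = (id ⊗ Δ̄)∘Δ̄. -/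
open TensorProduct LinearMap

section aux
variable {R C : Type*} [CommRing R] [AddCommGroup C] [Module R C] [Coalgebra R C]

lemma lemL (f g p q p₁ p₂ : C →ₗ[R] C)
    (hp : (Coalgebra.comul (R := R) (A := C)) ∘ₗ p = (TensorProduct.map p₁ p₂) ∘ₗ Coalgebra.comul) :
    (TensorProduct.assoc R C C C).toLinearMap ∘ₗ
      (LinearMap.rTensor C (TensorProduct.map f g ∘ₗ Coalgebra.comul) ∘ₗ
        (TensorProduct.map p q ∘ₗ Coalgebra.comul))
    = TensorProduct.map (f ∘ₗ p₁) (TensorProduct.map (g ∘ₗ p₂) q) ∘ₗ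
        (LinearMap.lTensor C (Coalgebra.comul) ∘ₗ Coalgebra.comul) := by
  have h1 : (LinearMap.rTensor C (Coalgebra.comul (R := R) (A := C))) ∘ₗ
        (TensorProduct.map p q ∘ₗ Coalgebra.comul)
      = TensorProduct.map (TensorProduct.map p₁ p₂) q ∘ₗ
          (LinearMap.rTensor C (Coalgebra.comul (R := R) (A := C)) ∘ₗ Coalgebra.comul) := by
    rw [← LinearMap.comp_assoc, LinearMap.rTensor_comp_map, hp,
      ← LinearMap.map_comp_rTensor, LinearMap.comp_assoc]
  have h2 : (LinearMap.rTensor C (TensorProduct.map f g)) ∘ₗ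
        TensorProduct.map (TensorProduct.map p₁ p₂) q
      = TensorProduct.map (TensorProduct.map (f ∘ₗ p₁) (g ∘ₗ p₂)) q := by
    rw [LinearMap.rTensor_comp_map, ← TensorProduct.map_comp]
  have h3 : (TensorProduct.assoc R C C C).toLinearMap ∘ₗ
        (LinearMap.rTensor C (Coalgebra.comul (R := R) (A := C)) ∘ₗ Coalgebra.comul)
      = LinearMap.lTensor C (Coalgebra.comul) ∘ₗ Coalgebra.comul := Coalgebra.coassoc
  rw [LinearMap.rTensor_comp]
  simp only [LinearMap.comp_assoc]
  rw [h1, ← LinearMap.comp_assoc _ (TensorProduct.map (TensorProduct.map p₁ p₂) q)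
      (LinearMap.rTensor C (TensorProduct.map f g)), h2,
    ← LinearMap.comp_assoc, ← TensorProduct.map_map_comp_assoc_eq, LinearMap.comp_assoc, h3]

lemma lemR (f g p q q₁ q₂ : C →ₗ[R] C)
    (hq : (Coalgebra.comul (R := R) (A := C)) ∘ₗ q = (TensorProduct.map q₁ q₂) ∘ₗ Coalgebra.comul) :
    LinearMap.lTensor C (TensorProduct.map f g ∘ₗ Coalgebra.comul) ∘ₗ
        (TensorProduct.map p q ∘ₗ Coalgebra.comul)
    = TensorProduct.map p (TensorProduct.map (f ∘ₗ q₁) (g ∘ₗ q₂)) ∘ₗ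
        (LinearMap.lTensor C (Coalgebra.comul) ∘ₗ Coalgebra.comul) := by
  have h1 : (LinearMap.lTensor C (Coalgebra.comul (R := R) (A := C))) ∘ₗ
        (TensorProduct.map p q ∘ₗ Coalgebra.comul)
      = TensorProduct.map p (TensorProduct.map q₁ q₂) ∘ₗ
          (LinearMap.lTensor C (Coalgebra.comul (R := R) (A := C)) ∘ₗ Coalgebra.comul) := by
    rw [← LinearMap.comp_assoc, LinearMap.lTensor_comp_map, hq,
      ← LinearMap.map_comp_lTensor, LinearMap.comp_assoc]
  have h2 : (LinearMap.lTensor C (TensorProduct.map f g)) ∘ₗ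
        TensorProduct.map p (TensorProduct.map q₁ q₂)
      = TensorProduct.map p (TensorProduct.map (f ∘ₗ q₁) (g ∘ₗ q₂)) := by
    rw [LinearMap.lTensor_comp_map, ← TensorProduct.map_comp]
  rw [LinearMap.lTensor_comp]
  simp only [LinearMap.comp_assoc]
  rw [h1, ← LinearMap.comp_assoc _ (TensorProduct.map p (TensorProduct.map q₁ q₂))
      (LinearMap.lTensor C (TensorProduct.map f g)), h2]

end aux

/-- If `δ : C → C` is an idempotent coalgebra endomorphism of a coalgebra `C` over a
commutative ring `R`, then the reduced comultiplication
`Δ̄ = Δ − (id ⊗ δ)∘Δ − (δ ⊗ id)∘Δ` is coassociative. -/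
theorem reduced_comul_coassoc {R C : Type*} [CommRing R] [AddCommGroup C] [Module R C]
    [Coalgebra R C] (δ : C →ₗ[R] C)
    (hδδ : δ ∘ₗ δ = δ)
    (hδε : (Coalgebra.counit (R := R) (A := C)) ∘ₗ δ = Coalgebra.counit)
    (hδΔ : (Coalgebra.comul (R := R) (A := C)) ∘ₗ δ = (TensorProduct.map δ δ) ∘ₗ Coalgebra.comul) :
    letI Δ : C →ₗ[R] C ⊗[R] C := Coalgebra.comul
    letI Δbar : C →ₗ[R] C ⊗[R] C :=
      Δ - (TensorProduct.map LinearMap.id δ) ∘ₗ Δ - (TensorProduct.map δ LinearMap.id) ∘ₗ Δ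
    (TensorProduct.assoc R C C C).toLinearMap ∘ₗ (LinearMap.rTensor C Δbar) ∘ₗ Δbar
      = (LinearMap.lTensor C Δbar) ∘ₗ Δbar := by
  show (TensorProduct.assoc R C C C).toLinearMap ∘ₗ
      (LinearMap.rTensor C (Coalgebra.comul
        - (TensorProduct.map LinearMap.id δ) ∘ₗ Coalgebra.comul
        - (TensorProduct.map δ LinearMap.id) ∘ₗ Coalgebra.comul)) ∘ₗ _ = _
  have hid : (Coalgebra.comul (R := R) (A := C)) ∘ₗ LinearMap.id
      = TensorProduct.map LinearMap.id LinearMap.id ∘ₗ Coalgebra.comul := by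
    simp [TensorProduct.map_id]
  have hbar : (Coalgebra.comul (R := R) (A := C))
      - (TensorProduct.map LinearMap.id δ) ∘ₗ Coalgebra.comul
      - (TensorProduct.map δ LinearMap.id) ∘ₗ Coalgebra.comul
      = (TensorProduct.map (LinearMap.id (M := C)) LinearMap.id) ∘ₗ Coalgebra.comul
      - (TensorProduct.map LinearMap.id δ) ∘ₗ Coalgebra.comul
      - (TensorProduct.map δ LinearMap.id) ∘ₗ Coalgebra.comul := by
    rw [TensorProduct.map_id, LinearMap.id_comp]
  rw [hbar]
  have Lid := fun f g q => lemL (R := R) (C := C) f g LinearMap.id q LinearMap.id LinearMap.id hid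
  have Lδ := fun f g q => lemL (R := R) (C := C) f g δ q δ δ hδΔ
  have Rid := fun f g p => lemR (R := R) (C := C) f g p LinearMap.id LinearMap.id LinearMap.id hid
  have Rδ := fun f g p => lemR (R := R) (C := C) f g p δ δ δ hδΔ
  simp only [LinearMap.rTensor_sub, LinearMap.lTensor_sub, LinearMap.sub_comp,
    LinearMap.comp_sub, LinearMap.comp_assoc]
  simp only [Lid, Lδ, Rid, Rδ, LinearMap.id_comp, LinearMap.comp_id, hδδ]
  abel
end

section
/- Every simply colored coalgebra (C, G, δ) over a field k is pointed: the coradical C₀ of C is contained in C[G] = span_k(G), so every cosimple subcoalgebra of C is one-dimensional. -/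
open TensorProduct

universe u
variable (k : Type u) [Field k] (C : Type u) [AddCommGroup C] [Module k C]

/-- Iterated tensor powers `C^{⊗(n+1)}` as bundled modules. -/
noncomputable def TP : ℕ → ModuleCat.{u} k
  | 0 => ModuleCat.of k C
  | n + 1 => ModuleCat.of k (C ⊗[k] (TP n))

/-- The `n`-th iterate of a comultiplication-like map `Δb : C → C ⊗ C`. -/
noncomputable def iterComul (Δb : C →ₗ[k] C ⊗[k] C) : (n : ℕ) → (C →ₗ[k] TP k C n)
  | 0 => LinearMap.id
  | n + 1 => (LinearMap.lTensor C (iterComul Δb n)) ∘ₗ Δb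

/-- A group-like (set-like) element of a coalgebra. -/
def IsGroupLike [Coalgebra k C] (g : C) : Prop :=
  Coalgebra.comul (R := k) g = g ⊗ₜ[k] g ∧ Coalgebra.counit (R := k) g = 1

/-- A subspace `S` of a coalgebra is a subcoalgebra if `Δ(S) ⊆ S ⊗ S`. -/
def IsSubcoalgebra [Coalgebra k C] (S : Submodule k C) : Prop :=
  Submodule.map (Coalgebra.comul (R := k) (A := C)) S ≤
    Submodule.map₂ (TensorProduct.mk k C C) S S

/-- A cosimple subcoalgebra: nonzero, with no proper nonzero subcoalgebras. -/
def IsCosimple [Coalgebra k C] (S : Submodule k C) : Prop :=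
  IsSubcoalgebra k C S ∧ S ≠ ⊥ ∧
    ∀ T : Submodule k C, IsSubcoalgebra k C T → T ≤ S → T = ⊥ ∨ T = S

/-- The coradical of a coalgebra: the sum of all its cosimple subcoalgebras. -/
noncomputable def coradical [Coalgebra k C] : Submodule k C :=
  sSup {S : Submodule k C | IsCosimple k C S}

/-! A cosimple subcoalgebra `S` meets the subcoalgebra `C[G] = span G` either trivially or in all
of `S`. Over a field, `(S ⊗ S) ∩ (X ⊗ C + C ⊗ Y) ⊆ (S ∩ X) ⊗ S + S ⊗ (S ∩ Y)`, and the counit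
makes `Δ` injective, so a subcoalgebra meeting `X` and `Y` trivially also meets the wedge `X ∧ Y`
trivially; hence in the first case `S` meets every wedge power of `C[G]` trivially. But these wedge
powers exhaust `C`: `x = δ x + (x - δ x)`, and `x - δ x ∈ ker δ` is killed by an iterate of `Δ̄`.
So `S ⊆ C[G]`. Contracting `Δ x` (for `0 ≠ x ∈ S`) with a coordinate functional of the
group-likes, which are linearly independent, puts a group-like `g` into `S`, whence `S = k g`. -/

local notation:70 P:71 " ⊗ₛ " Q:71 => Submodule.map₂ (TensorProduct.mk _ _ _) P Q

section TensorSubmodules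

open LinearMap Submodule

variable {K M N X Y : Type*} [Field K] [AddCommGroup M] [Module K M] [AddCommGroup N] [Module K N]
  [AddCommGroup X] [Module K X] [AddCommGroup Y] [Module K Y]

theorem LinearMap.ker_lTensor_eq_map₂ (h : N →ₗ[K] X) :
    ker (h.lTensor M) = (⊤ : Submodule K M) ⊗ₛ ker h := by
  rw [LinearMap.exact_iff.mp (Module.Flat.lTensor_exact M h.exact_subtype_ker_map),
    lTensor, range_map, range_id, range_subtype]

theorem TensorProduct.ker_map_eq_sup (f : M →ₗ[K] X) (g : N →ₗ[K] Y) :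
    ker (map f g) = range ((ker g).subtype.lTensor M) ⊔ range ((ker f).subtype.rTensor N) := by
  have hfactor : map f g = map (range f).subtype (range g).subtype ∘ₗ
      map f.rangeRestrict g.rangeRestrict := by
    rw [← map_comp]; rfl
  have hinj : Function.Injective (map (range f).subtype (range g).subtype) := by
    rw [← lTensor_comp_rTensor, coe_comp]
    exact (Module.Flat.lTensor_preserves_injective_linearMap _ (injective_subtype _)).comp
      (Module.Flat.rTensor_preserves_injective_linearMap _ (injective_subtype _))
  have hf : Function.Exact (ker f).subtype f.rangeRestrict := by
    rw [LinearMap.exact_iff, ker_rangeRestrict, range_subtype]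
  have hg : Function.Exact (ker g).subtype g.rangeRestrict := by
    rw [LinearMap.exact_iff, ker_rangeRestrict, range_subtype]
  rw [hfactor, ker_comp, ker_eq_bot.mpr hinj, comap_bot,
    map_ker hf f.surjective_rangeRestrict hg g.surjective_rangeRestrict]

theorem Submodule.range_subtype_comp_subtype_ker_comp (P : Submodule K M) (f : M →ₗ[K] X) :
    range (P.subtype ∘ₗ (ker (f ∘ₗ P.subtype)).subtype) = P ⊓ ker f := by
  rw [range_comp, range_subtype, ker_comp, map_comap_subtype]

theorem Submodule.map₂_mk_inf_ker_map_le (P : Submodule K M) (Q : Submodule K N)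
    (f : M →ₗ[K] X) (g : N →ₗ[K] Y) :
    P ⊗ₛ Q ⊓ ker (TensorProduct.map f g) ≤ (P ⊓ ker f) ⊗ₛ Q ⊔ P ⊗ₛ (Q ⊓ ker g) := by
  rintro _ ⟨hs, hker⟩
  rw [← range_mapIncl] at hs
  obtain ⟨s, rfl⟩ := hs
  have hs : s ∈ ker (TensorProduct.map (f ∘ₗ P.subtype) (g ∘ₗ Q.subtype)) := by
    rwa [mem_ker, TensorProduct.map_comp, comp_apply]
  rw [ker_map_eq_sup] at hs
  obtain ⟨_, ⟨a, rfl⟩, _, ⟨b, rfl⟩, rfl⟩ := mem_sup.mp hs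
  rw [map_add, ← comp_apply, ← comp_apply, map_comp_lTensor, map_comp_rTensor]
  refine add_mem (mem_sup_right ?_) (mem_sup_left ?_)
  · have ha := mem_range_self
      (TensorProduct.map P.subtype (Q.subtype ∘ₗ (ker (g ∘ₗ Q.subtype)).subtype)) a
    rwa [range_map, range_subtype, range_subtype_comp_subtype_ker_comp] at ha
  · have hb := mem_range_self
      (TensorProduct.map (P.subtype ∘ₗ (ker (f ∘ₗ P.subtype)).subtype) Q.subtype) b
    rwa [range_map, range_subtype, range_subtype_comp_subtype_ker_comp] at hb

theorem Submodule.map₂_mk_le_ker_map_mkQ (P Q : Submodule K M) :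
    P ⊗ₛ ⊤ ⊔ ⊤ ⊗ₛ Q ≤ ker (TensorProduct.map P.mkQ Q.mkQ) := by
  refine sup_le (map₂_le.mpr fun m hm n _ => ?_) (map₂_le.mpr fun m _ n hn => ?_)
  · simp [(Quotient.mk_eq_zero _).mpr hm]
  · simp [(Quotient.mk_eq_zero _).mpr hn]

theorem Submodule.map₂_mk_inf_sup_le (P Q P' Q' : Submodule K M) :
    P ⊗ₛ Q ⊓ (P' ⊗ₛ ⊤ ⊔ ⊤ ⊗ₛ Q') ≤ (P ⊓ P') ⊗ₛ Q ⊔ P ⊗ₛ (Q ⊓ Q') := by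
  simpa only [ker_mkQ] using
    (inf_le_inf_left _ (map₂_mk_le_ker_map_mkQ P' Q')).trans (map₂_mk_inf_ker_map_le P Q _ _)

theorem Submodule.map₂_mk_inf_map₂_mk_le (P Q P' Q' : Submodule K M) :
    P ⊗ₛ Q ⊓ P' ⊗ₛ Q' ≤ (P ⊓ P') ⊗ₛ (Q ⊓ Q') := by
  have hleft := map₂_mk_inf_sup_le P Q P' ⊥
  have hright := map₂_mk_inf_sup_le (P ⊓ P') Q ⊥ Q'
  simp only [map₂_bot_right, map₂_bot_left, sup_bot_eq, bot_sup_eq, inf_bot_eq] at hleft hright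
  rintro t ⟨htPQ, htPQ'⟩
  exact hright ⟨hleft ⟨htPQ, map₂_le_map₂_right le_top htPQ'⟩,
    map₂_le_map₂_left le_top htPQ'⟩

end TensorSubmodules

section Coalgebra

open Coalgebra

variable {k C} [Coalgebra k C]

theorem eq_zero_of_comul_eq_zero {x : C} (hx : comul (R := k) x = 0) : x = 0 := by
  simpa [hx] using (congrArg (TensorProduct.lid k C) (rTensor_counit_comul (R := k) x)).symm

theorem IsSubcoalgebra.inf {S T : Submodule k C} (hS : IsSubcoalgebra k C S)
    (hT : IsSubcoalgebra k C T) : IsSubcoalgebra k C (S ⊓ T) := by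
  rintro _ ⟨x, ⟨hxS, hxT⟩, rfl⟩
  exact Submodule.map₂_mk_inf_map₂_mk_le S S T T
    ⟨hS (Submodule.mem_map_of_mem hxS), hT (Submodule.mem_map_of_mem hxT)⟩

theorem isSubcoalgebra_span {G : Set C} (hG : ∀ g ∈ G, IsGroupLike k C g) :
    IsSubcoalgebra k C (Submodule.span k G) := by
  rw [IsSubcoalgebra, Submodule.map_span, Submodule.span_le]
  rintro _ ⟨g, hg, rfl⟩
  rw [SetLike.mem_coe, (hG g hg).1]
  exact Submodule.apply_mem_map₂ _ (Submodule.subset_span hg) (Submodule.subset_span hg)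

theorem IsSubcoalgebra.lid_rTensor_comul_mem {S : Submodule k C} (hS : IsSubcoalgebra k C S)
    (f : C →ₗ[k] k) {x : C} (hx : x ∈ S) :
    TensorProduct.lid k C (f.rTensor C (comul x)) ∈ S := by
  have hle : S ⊗ₛ S ≤ S.comap ((TensorProduct.lid k C).toLinearMap ∘ₗ f.rTensor C) :=
    Submodule.map₂_le.mpr fun m _ n hn => by simpa using S.smul_mem (f m) hn
  exact hle (hS (Submodule.mem_map_of_mem hx))

variable (k) in
/-- The wedge `X ∧ Y = Δ⁻¹(X ⊗ C + C ⊗ Y)`. -/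
def wedge (X Y : Submodule k C) : Submodule k C :=
  (X ⊗ₛ (⊤ : Submodule k C) ⊔ (⊤ : Submodule k C) ⊗ₛ Y).comap (comul (R := k) (A := C))

variable (k) in
/-- `wedgePow k D n` is the `(n + 1)`-fold wedge power `D ∧ ⋯ ∧ D`. -/
def wedgePow (D : Submodule k C) : ℕ → Submodule k C
  | 0 => D
  | n + 1 => wedge k D (wedgePow D n)

theorem IsSubcoalgebra.le_wedge {D : Submodule k C} (hD : IsSubcoalgebra k C D)
    (Y : Submodule k C) : D ≤ wedge k D Y := fun _ hx =>
  Submodule.mem_sup_left (Submodule.map₂_le_map₂_right le_top (hD (Submodule.mem_map_of_mem hx)))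

theorem IsSubcoalgebra.le_wedgePow {D : Submodule k C} (hD : IsSubcoalgebra k C D) :
    ∀ n, D ≤ wedgePow k D n
  | 0 => le_rfl
  | _ + 1 => hD.le_wedge _

theorem IsSubcoalgebra.inf_wedge_eq_bot {S X Y : Submodule k C} (hS : IsSubcoalgebra k C S)
    (hX : S ⊓ X = ⊥) (hY : S ⊓ Y = ⊥) : S ⊓ wedge k X Y = ⊥ := by
  refine eq_bot_iff.mpr fun x ⟨hxS, hxXY⟩ => (Submodule.mem_bot k).mpr ?_
  have hcomul := Submodule.map₂_mk_inf_sup_le S S X Y ⟨hS (Submodule.mem_map_of_mem hxS), hxXY⟩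
  rw [hX, hY, Submodule.map₂_bot_left, Submodule.map₂_bot_right, sup_bot_eq] at hcomul
  exact eq_zero_of_comul_eq_zero ((Submodule.mem_bot k).mp hcomul)

theorem IsSubcoalgebra.inf_wedgePow_eq_bot {S D : Submodule k C} (hS : IsSubcoalgebra k C S)
    (hD : S ⊓ D = ⊥) : ∀ n, S ⊓ wedgePow k D n = ⊥
  | 0 => hD
  | n + 1 => hS.inf_wedge_eq_bot hD (hS.inf_wedgePow_eq_bot hD n)

theorem IsCosimple.le_of_forall_exists_mem_wedgePow {S D : Submodule k C}
    (hS : IsCosimple k C S) (hD : IsSubcoalgebra k C D)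
    (hexh : ∀ x, ∃ n, x ∈ wedgePow k D n) : S ≤ D := by
  obtain ⟨hSsub, hSne, hmin⟩ := hS
  refine (hmin _ (hSsub.inf hD) inf_le_left).elim (fun hbot => ?_) (fun h => h ▸ inf_le_right)
  obtain ⟨x, hxS, hx0⟩ := (Submodule.ne_bot_iff S).mp hSne
  obtain ⟨n, hxn⟩ := hexh x
  have hx : x ∈ S ⊓ wedgePow k D n := ⟨hxS, hxn⟩
  rw [hSsub.inf_wedgePow_eq_bot hbot n, Submodule.mem_bot] at hx
  exact absurd hx hx0

theorem coradical_le_of_forall_exists_mem_wedgePow {D : Submodule k C}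
    (hD : IsSubcoalgebra k C D) (hexh : ∀ x, ∃ n, x ∈ wedgePow k D n) : coradical k C ≤ D :=
  sSup_le fun _ hS => IsCosimple.le_of_forall_exists_mem_wedgePow hS hD hexh

end Coalgebra

section SimplyColored

open LinearMap Coalgebra

variable {k C}

theorem ker_iterComul_succ_le (Δb : C →ₗ[k] C ⊗[k] C) (n : ℕ) :
    ker (iterComul k C Δb (n + 1)) ≤
      ((⊤ : Submodule k C) ⊗ₛ ker (iterComul k C Δb n)).comap Δb := by
  intro x hx
  rw [Submodule.mem_comap, ← ker_lTensor_eq_map₂]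
  exact hx

variable [Coalgebra k C]

def reducedComul (δ : C →ₗ[k] C) : C →ₗ[k] C ⊗[k] C :=
  comul - TensorProduct.map δ id ∘ₗ comul - TensorProduct.map id δ ∘ₗ comul

theorem comul_eq_reducedComul_add (δ : C →ₗ[k] C) (x : C) :
    comul x = reducedComul δ x + TensorProduct.map δ id (comul x) +
      TensorProduct.map id δ (comul x) := by
  simp only [reducedComul, LinearMap.sub_apply, comp_apply]
  abel

theorem ker_iterComul_reducedComul_le_wedgePow {D : Submodule k C} (hD : IsSubcoalgebra k C D)
    {δ : C →ₗ[k] C} (hδ : range δ ≤ D) :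
    ∀ n, ker (iterComul k C (reducedComul δ) n) ≤ wedgePow k D n
  | 0 => fun x hx => by
    rw [mem_ker] at hx
    exact (show x = 0 from hx) ▸ D.zero_mem
  | n + 1 => fun x hx => by
    have hδC : range (TensorProduct.map δ id) ≤ D ⊗ₛ (⊤ : Submodule k C) := by
      rw [TensorProduct.range_map]
      exact Submodule.map₂_le_map₂ hδ le_top
    have hCδ : range (TensorProduct.map id δ) ≤ (⊤ : Submodule k C) ⊗ₛ wedgePow k D n := by
      rw [TensorProduct.range_map, range_id]
      exact Submodule.map₂_le_map₂_right (hδ.trans (hD.le_wedgePow n))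
    rw [wedgePow, wedge, Submodule.mem_comap, comul_eq_reducedComul_add δ x]
    refine add_mem (add_mem ?_ (Submodule.mem_sup_left (hδC (mem_range_self _ _))))
      (Submodule.mem_sup_right (hCδ (mem_range_self _ _)))
    exact Submodule.mem_sup_right (Submodule.map₂_le_map₂_right
      (ker_iterComul_reducedComul_le_wedgePow hD hδ n) (ker_iterComul_succ_le _ n hx))

theorem exists_mem_wedgePow_of_iterComul_reducedComul_eq_zero {D : Submodule k C}
    (hD : IsSubcoalgebra k C D) {δ : C →ₗ[k] C} (hδ : range δ ≤ D) (hδδ : δ ∘ₗ δ = δ)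
    (hnil : ∀ x ∈ ker δ, ∃ N, iterComul k C (reducedComul δ) N x = 0) (x : C) :
    ∃ n, x ∈ wedgePow k D n := by
  have hker : x - δ x ∈ ker δ := by
    rw [mem_ker, map_sub, ← comp_apply δ δ, hδδ, sub_self]
  obtain ⟨n, hn⟩ := hnil _ hker
  refine ⟨n, ?_⟩
  simpa using add_mem (hD.le_wedgePow n (hδ (mem_range_self δ x)))
    (ker_iterComul_reducedComul_le_wedgePow hD hδ n hn)

theorem IsGroupLike.isGroupLikeElem {g : C} (hg : IsGroupLike k C g) : IsGroupLikeElem k g :=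
  ⟨hg.2, hg.1⟩

theorem IsSubcoalgebra.exists_mem_of_le_span {G : Set C} (hG : ∀ g ∈ G, IsGroupLike k C g)
    {S : Submodule k C} (hS : IsSubcoalgebra k C S) (hS0 : S ≠ ⊥)
    (hle : S ≤ Submodule.span k G) : ∃ g ∈ G, g ∈ S := by
  have hli : LinearIndepOn k _root_.id G :=
    linearIndepOn_isGroupLikeElem.mono fun g hg => (hG g hg).isGroupLikeElem
  let b := Module.Basis.extend hli
  have hG_eq : G = b '' {j | (j : C) ∈ G} := by
    ext y
    simpa [b, Module.Basis.extend_apply_self] using fun hy => hli.subset_extend _ hy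
  obtain ⟨x, hxS, hx0⟩ := (Submodule.ne_bot_iff S).mp hS0
  obtain ⟨i, hi⟩ := Finsupp.ne_iff.mp (b.repr.map_ne_zero_iff.mpr hx0)
  have hiG : (i : C) ∈ G :=
    b.mem_span_image.mp (hG_eq ▸ hle hxS) (Finsupp.mem_support_iff.mpr hi)
  have hcontract : ∀ y ∈ Submodule.span k G,
      TensorProduct.lid k C ((b.coord i).rTensor C (comul y)) = b.coord i y • (i : C) := by
    refine eqOn_span (f := (TensorProduct.lid k C).toLinearMap ∘ₗ (b.coord i).rTensor C ∘ₗ comul)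
      (g := (b.coord i).smulRight (i : C)) fun g hg => ?_
    let j : hli.extend (Set.subset_univ G) := ⟨g, hli.subset_extend _ hg⟩
    have hbj : b j = g := Module.Basis.extend_apply_self hli j
    by_cases hji : j = i
    · simp [(hG g hg).1, ← hji, j]
    · have hcoord : b.coord i g = 0 := by simp [← hbj, hji]
      simp [(hG g hg).1, hcoord]
  refine ⟨i, hiG, (S.smul_mem_iff hi).mp ?_⟩
  simpa [hcontract x (hle hxS)] using hS.lid_rTensor_comul_mem (b.coord i) hxS

theorem IsCosimple.finrank_eq_one_of_le_span {G : Set C} (hG : ∀ g ∈ G, IsGroupLike k C g)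
    {S : Submodule k C} (hS : IsCosimple k C S) (hle : S ≤ Submodule.span k G) :
    Module.finrank k S = 1 := by
  obtain ⟨hSsub, hS0, hmin⟩ := hS
  obtain ⟨g, hg, hgS⟩ := hSsub.exists_mem_of_le_span hG hS0 hle
  have hg0 : g ≠ 0 := (hG g hg).isGroupLikeElem.ne_zero
  have hspan : IsSubcoalgebra k C (Submodule.span k {g}) :=
    isSubcoalgebra_span (by simpa using hG g hg)
  rcases hmin _ hspan ((Submodule.span_singleton_le_iff_mem g S).mpr hgS) with h | h
  · exact absurd (Submodule.span_singleton_eq_bot.mp h) hg0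
  · exact h ▸ finrank_span_singleton hg0

end SimplyColored

theorem simplyColored_isPointed [Coalgebra k C]
    (G : Set C) (hG : ∀ g ∈ G, IsGroupLike k C g)
    (δ : C →ₗ[k] C) (hrange : LinearMap.range δ = Submodule.span k G)
    (hδδ : δ ∘ₗ δ = δ)
    (hconil : ∀ x ∈ LinearMap.ker δ, ∃ N : ℕ,
      iterComul k C
        (Coalgebra.comul
          - (TensorProduct.map δ LinearMap.id) ∘ₗ Coalgebra.comul
          - (TensorProduct.map LinearMap.id δ) ∘ₗ Coalgebra.comul) N x = 0) :
    coradical k C ≤ Submodule.span k G ∧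
      ∀ S : Submodule k C, IsCosimple k C S → Module.finrank k S = 1 := by
  have hspan := isSubcoalgebra_span hG
  have hcorad : coradical k C ≤ Submodule.span k G :=
    coradical_le_of_forall_exists_mem_wedgePow hspan
      (exists_mem_wedgePow_of_iterComul_reducedComul_eq_zero hspan hrange.le hδδ hconil)
  exact ⟨hcorad, fun S hS => hS.finrank_eq_one_of_le_span hG
    ((le_sSup (s := {S | IsCosimple k C S}) hS).trans hcorad)⟩
end
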